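/- For every η ∈ (0,1) and α, β > 0, there exists η̄ ∈ (0,1) and a constant C > 0 such that for every measurable A ⊆ R^n and every nonnegative measurable H on R^{n+1}_+: ∬_{R_γ^{(1-η)α,(1-η)β}(A^{[η̄]}_{β(1+β)})} H(y,t) dγ(y) dt/t ≤ C ∫_A (∬_{Γ_γ^{α,β}(x)} H(y,t)/γ(B(y, min(αt, m_β(y)))) dγ(y) dt/t) dγ(x). -/

import Mathlib

open MeasureTheory Metric Set ENNReal

noncomputable def mCut {n : ℕ} (x : EuclideanSpace ℝ (Fin n)) : ℝ :=
  if ‖x‖ ≤ 1 then 1 else 1 / ‖x‖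

noncomputable def gaussM (n : ℕ) : Measure (EuclideanSpace ℝ (Fin n)) :=
  volume.withDensity fun y => ENNReal.ofReal (Real.exp (-‖y‖ ^ 2))

noncomputable def dtt : Measure ℝ :=
  (volume.restrict (Set.Ioi (0 : ℝ))).withDensity fun t => ENNReal.ofReal (1 / t)

noncomputable def tentMeasure (n : ℕ) : Measure (EuclideanSpace ℝ (Fin n) × ℝ) :=
  (gaussM n).prod dtt

def gaussCone {n : ℕ} (α β : ℝ) (x : EuclideanSpace ℝ (Fin n)) :
    Set (EuclideanSpace ℝ (Fin n) × ℝ) :=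
  {p | 0 < p.2 ∧ dist p.1 x < min (α * p.2) (β * mCut p.1)}

def gaussTent {n : ℕ} (α β : ℝ) (B : Set (EuclideanSpace ℝ (Fin n))) :
    Set (EuclideanSpace ℝ (Fin n) × ℝ) :=
  {p | 0 < p.2 ∧ min (α * p.2) (β * mCut p.1) ≤ Metric.infDist p.1 Bᶜ}

noncomputable def areaS {n : ℕ} (q α β : ℝ) (f : EuclideanSpace ℝ (Fin n) × ℝ → ℝ)
    (x : EuclideanSpace ℝ (Fin n)) : ℝ≥0∞ :=
  (∫⁻ p in gaussCone α β x,
      ENNReal.ofReal (|f p| ^ q) /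
        gaussM n (Metric.ball p.1 (min (α * p.2) (β * mCut p.1))) ∂ tentMeasure n) ^ (1 / q)

noncomputable def areaSInf {n : ℕ} (α β : ℝ) (f : EuclideanSpace ℝ (Fin n) × ℝ → ℝ)
    (x : EuclideanSpace ℝ (Fin n)) : ℝ≥0∞ :=
  ⨆ p ∈ gaussCone α β x, ENNReal.ofReal |f p|


lemma mCut_eq {n : ℕ} (x : EuclideanSpace ℝ (Fin n)) : mCut x = (max ‖x‖ 1)⁻¹ := by
  unfold mCut
  rcases le_or_gt ‖x‖ 1 with h | h
  · rw [if_pos h, max_eq_right h, inv_one]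
  · rw [if_neg (not_le.mpr h), max_eq_left h.le, one_div]

lemma one_lt_max_norm {n : ℕ} (x : EuclideanSpace ℝ (Fin n)) : (0:ℝ) < max ‖x‖ 1 :=
  lt_of_lt_of_le one_pos (le_max_right _ _)

lemma mCut_pos {n : ℕ} (x : EuclideanSpace ℝ (Fin n)) : 0 < mCut x := by
  rw [mCut_eq]; exact inv_pos.mpr (one_lt_max_norm x)

lemma mCut_le_one {n : ℕ} (x : EuclideanSpace ℝ (Fin n)) : mCut x ≤ 1 := by
  rw [mCut_eq]
  exact inv_le_one_of_one_le₀ (le_max_right _ _)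

lemma norm_mul_mCut_le_one {n : ℕ} (x : EuclideanSpace ℝ (Fin n)) : ‖x‖ * mCut x ≤ 1 := by
  rw [mCut_eq, ← div_eq_mul_inv, div_le_one (one_lt_max_norm x)]
  exact le_max_left _ _

lemma mCut_continuous {n : ℕ} : Continuous (mCut (n := n)) := by
  have : (mCut (n := n)) = fun x => (max ‖x‖ 1)⁻¹ := funext mCut_eq
  rw [this]
  exact (continuous_norm.max continuous_const).inv₀ fun x => (one_lt_max_norm x).ne'

lemma mCut_comp {n : ℕ} {β : ℝ} (hβ : 0 < β) {x y : EuclideanSpace ℝ (Fin n)}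
    (h : dist x y ≤ β * mCut y) : mCut y ≤ (1 + β) * mCut x := by
  rw [mCut_eq] at h ⊢
  rw [mCut_eq]
  set a := max ‖y‖ 1 with ha'
  set b := max ‖x‖ 1 with hb'
  have ha : (1:ℝ) ≤ a := le_max_right _ _
  have hb : (1:ℝ) ≤ b := le_max_right _ _
  have ha0 : (0:ℝ) < a := one_lt_max_norm y
  have hb0 : (0:ℝ) < b := one_lt_max_norm x
  have h2 : b ≤ (1 + β) * a := by
    have hx : ‖x‖ ≤ ‖y‖ + dist x y := by
      have := norm_le_norm_add_norm_sub' x y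
      have hd : dist x y = ‖x - y‖ := by rw [dist_eq_norm]
      nlinarith [norm_sub_rev x y]
    have hinv : a⁻¹ ≤ a := le_trans (inv_le_one_of_one_le₀ ha) ha
    have hya : ‖y‖ ≤ a := le_max_left _ _
    have : ‖x‖ ≤ (1 + β) * a := by nlinarith [h]
    refine max_le this (by nlinarith)
  have hia : (0:ℝ) < a⁻¹ := inv_pos.mpr ha0
  have hib : (0:ℝ) < b⁻¹ := inv_pos.mpr hb0
  have key : a⁻¹ * b ≤ (1 + β) := by
    calc a⁻¹ * b ≤ a⁻¹ * ((1 + β) * a) := by nlinarith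
    _ = (1 + β) * (a⁻¹ * a) := by ring
    _ = 1 + β := by rw [inv_mul_cancel₀ ha0.ne']; ring
  calc a⁻¹ = (a⁻¹ * b) * b⁻¹ := by field_simp
  _ ≤ (1 + β) * b⁻¹ := by nlinarith

lemma gaussM_apply {n : ℕ} {s : Set (EuclideanSpace ℝ (Fin n))} (hs : MeasurableSet s) :
    gaussM n s = ∫⁻ w in s, ENNReal.ofReal (Real.exp (-‖w‖ ^ 2)) ∂volume :=
  withDensity_apply _ hs

lemma gaussM_lb {n : ℕ} {s : Set (EuclideanSpace ℝ (Fin n))} (hs : MeasurableSet s) {c : ℝ}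
    (h : ∀ w ∈ s, ‖w‖ ^ 2 ≤ c) :
    ENNReal.ofReal (Real.exp (-c)) * volume s ≤ gaussM n s := by
  rw [gaussM_apply hs, ← setLIntegral_const s _]
  exact setLIntegral_mono' hs fun w hw =>
    ENNReal.ofReal_le_ofReal (Real.exp_le_exp.mpr (by linarith [h w hw]))

lemma gaussM_ub {n : ℕ} {s : Set (EuclideanSpace ℝ (Fin n))} (hs : MeasurableSet s) {c : ℝ}
    (h : ∀ w ∈ s, c ≤ ‖w‖ ^ 2) :
    gaussM n s ≤ ENNReal.ofReal (Real.exp (-c)) * volume s := by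
  rw [gaussM_apply hs, ← setLIntegral_const s _]
  exact setLIntegral_mono' hs fun w hw =>
    ENNReal.ofReal_le_ofReal (Real.exp_le_exp.mpr (by linarith [h w hw]))

lemma gaussM_ball_ne_zero {n : ℕ} (y : EuclideanSpace ℝ (Fin n)) {r : ℝ} (hr : 0 < r) :
    gaussM n (ball y r) ≠ 0 := by
  have h1 := gaussM_lb (s := ball y r) measurableSet_ball (c := (‖y‖ + r) ^ 2)
    (fun w hw => by
      have h2 : ‖w‖ ≤ ‖y‖ + r := by
        have h3 := mem_ball.mp hw
        have h4 := norm_le_norm_add_norm_sub' w y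
        have h5 : ‖w - y‖ = dist w y := (dist_eq_norm w y).symm
        nlinarith
      nlinarith [norm_nonneg w, norm_nonneg y, hr.le])
  intro h0
  rw [h0] at h1
  have hv : volume (ball y r) ≠ 0 := (measure_ball_pos volume y hr).ne'
  have he : ENNReal.ofReal (Real.exp (-(‖y‖ + r) ^ 2)) ≠ 0 := by
    simp [Real.exp_pos]
  exact (ENNReal.mul_pos he hv).ne' (le_antisymm h1 zero_le)

lemma gaussM_le_volume {n : ℕ} {s : Set (EuclideanSpace ℝ (Fin n))} (hs : MeasurableSet s) :
    gaussM n s ≤ volume s := by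
  have := gaussM_ub hs (c := 0) (fun w _ => by positivity)
  simpa using this

lemma gaussM_ball_ne_top {n : ℕ} (y : EuclideanSpace ℝ (Fin n)) (r : ℝ) :
    gaussM n (ball y r) ≠ ⊤ :=
  ((gaussM_le_volume measurableSet_ball).trans_lt measure_ball_lt_top).ne

lemma key_density {n : ℕ} {α β η : ℝ} (hα : 0 < α) (hβ : 0 < β) (hη : 0 < η) (hη1 : η < 1)
    (A : Set (EuclideanSpace ℝ (Fin n)))
    {x y : EuclideanSpace ℝ (Fin n)} {t : ℝ} (ht : 0 < t)
    (hd : dist y x < (1 - η) * min (α * t) (β * mCut y))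
    (hx : ∀ r : ℝ, 0 < r → r ≤ β * (1 + β) * mCut x →
      ENNReal.ofReal (1/2) * gaussM n (ball x r) ≤ gaussM n (A ∩ ball x r)) :
    ENNReal.ofReal (1/2 * η ^ n * Real.exp (-(4*β + 4*β^2))) *
        gaussM n (ball y (min (α * t) (β * mCut y)))
      ≤ gaussM n (A ∩ ball y (min (α * t) (β * mCut y))) := by
  set r := min (α * t) (β * mCut y) with hrdef
  have hmy := mCut_pos y
  have hmy1 := mCut_le_one y
  have hmx := mCut_pos x
  have hr0 : 0 < r := lt_min (mul_pos hα ht) (mul_pos hβ hmy)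
  have hrβm : r ≤ β * mCut y := min_le_right _ _
  have hrβ : r ≤ β := hrβm.trans (by nlinarith)
  have hry : r * ‖y‖ ≤ β := by nlinarith [norm_mul_mCut_le_one y, norm_nonneg y]
  have hd' : dist y x < (1 - η) * r := hd
  have hdr : dist y x < r := hd'.trans_le (by nlinarith)
  have hdxy : dist x y ≤ β * mCut y := by rw [dist_comm]; exact hdr.le.trans hrβm
  have hm : mCut y ≤ (1 + β) * mCut x := mCut_comp hβ hdxy
  set ρ := η * r with hρdef
  have hρ0 : 0 < ρ := mul_pos hη hr0
  have hρle : ρ ≤ β * (1 + β) * mCut x := by nlinarith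
  have hsub : ball x ρ ⊆ ball y r := by
    intro z hz
    have h1 : dist z x < ρ := mem_ball.mp hz
    have h2 : dist z y ≤ dist z x + dist x y := dist_triangle z x y
    have h3 : dist x y < (1 - η) * r := by rw [dist_comm]; exact hd'
    have : dist z y < r := by nlinarith
    exact mem_ball.mpr this
  have hwub : ∀ w ∈ ball y r, ‖w‖ ≤ ‖y‖ + r := by
    intro w hw
    have h3 := mem_ball.mp hw
    have h4 := norm_le_norm_add_norm_sub' w y
    have h5 : ‖w - y‖ = dist w y := (dist_eq_norm w y).symm
    nlinarith
  have hub : gaussM n (ball y r) ≤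
      ENNReal.ofReal (Real.exp (-(‖y‖^2 - (2*β + 3*β^2)))) * volume (ball y r) := by
    refine gaussM_ub measurableSet_ball fun w hw => ?_
    have h1 := hwub w hw
    have h2 : ‖y‖ ≤ ‖w‖ + r := by
      have h3 := norm_le_norm_add_norm_sub' y w
      have h5 : ‖y - w‖ = dist w y := by rw [dist_eq_norm, norm_sub_rev]
      have h6 := mem_ball.mp hw
      nlinarith
    nlinarith [norm_nonneg w, norm_nonneg y]
  have hlb : ENNReal.ofReal (Real.exp (-(‖y‖^2 + (2*β + β^2)))) * volume (ball x ρ) ≤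
      gaussM n (ball x ρ) := by
    refine gaussM_lb measurableSet_ball fun w hw => ?_
    have h1 := hwub w (hsub hw)
    nlinarith [norm_nonneg w, norm_nonneg y]
  have hvx : volume (ball x ρ) = ENNReal.ofReal (ρ ^ n) *
      volume (ball (0 : EuclideanSpace ℝ (Fin n)) 1) := by
    rw [Measure.addHaar_ball_of_pos _ _ hρ0, finrank_euclideanSpace_fin]
  have hvy : volume (ball y r) = ENNReal.ofReal (r ^ n) *
      volume (ball (0 : EuclideanSpace ℝ (Fin n)) 1) := by
    rw [Measure.addHaar_ball_of_pos _ _ hr0, finrank_euclideanSpace_fin]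
  set V := volume (ball (0 : EuclideanSpace ℝ (Fin n)) 1)
  have hreal : 1/2 * η ^ n * Real.exp (-(4*β + 4*β^2)) *
      Real.exp (-(‖y‖^2 - (2*β + 3*β^2))) * r ^ n
      = 1/2 * Real.exp (-(‖y‖^2 + (2*β + β^2))) * ρ ^ n := by
    have hexp : Real.exp (-(4*β + 4*β^2)) * Real.exp (-(‖y‖^2 - (2*β + 3*β^2)))
        = Real.exp (-(‖y‖^2 + (2*β + β^2))) := by
      rw [← Real.exp_add]; congr 1; ring
    calc 1/2 * η ^ n * Real.exp (-(4*β + 4*β^2)) *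
        Real.exp (-(‖y‖^2 - (2*β + 3*β^2))) * r ^ n
        = 1/2 * (Real.exp (-(4*β + 4*β^2)) * Real.exp (-(‖y‖^2 - (2*β + 3*β^2))))
            * (η ^ n * r ^ n) := by ring
      _ = 1/2 * Real.exp (-(‖y‖^2 + (2*β + β^2))) * ρ ^ n := by
          rw [hexp, hρdef, mul_pow]
  have hexp1 : (0:ℝ) ≤ 1/2 * η ^ n * Real.exp (-(4*β + 4*β^2)) := by positivity
  calc ENNReal.ofReal (1/2 * η ^ n * Real.exp (-(4*β + 4*β^2))) * gaussM n (ball y r)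
      ≤ ENNReal.ofReal (1/2 * η ^ n * Real.exp (-(4*β + 4*β^2))) *
        (ENNReal.ofReal (Real.exp (-(‖y‖^2 - (2*β + 3*β^2)))) * (ENNReal.ofReal (r ^ n) * V)) := by
        rw [← hvy]; exact mul_le_mul_right hub _
    _ = ENNReal.ofReal (1/2 * η ^ n * Real.exp (-(4*β + 4*β^2)) *
          Real.exp (-(‖y‖^2 - (2*β + 3*β^2))) * r ^ n) * V := by
        have e1 : ENNReal.ofReal (1/2 * η ^ n * Real.exp (-(4*β + 4*β^2)) *
            Real.exp (-(‖y‖^2 - (2*β + 3*β^2))) * r ^ n)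
            = ENNReal.ofReal (1/2 * η ^ n * Real.exp (-(4*β + 4*β^2))) *
              ENNReal.ofReal (Real.exp (-(‖y‖^2 - (2*β + 3*β^2)))) *
              ENNReal.ofReal (r ^ n) := by
          rw [ENNReal.ofReal_mul (by positivity), ENNReal.ofReal_mul hexp1]
        rw [e1]; ring
    _ = ENNReal.ofReal (1/2 * Real.exp (-(‖y‖^2 + (2*β + β^2))) * ρ ^ n) * V := by rw [hreal]
    _ = ENNReal.ofReal (1/2) * (ENNReal.ofReal (Real.exp (-(‖y‖^2 + (2*β + β^2)))) *
          (ENNReal.ofReal (ρ ^ n) * V)) := by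
        have e2 : ENNReal.ofReal (1/2 * Real.exp (-(‖y‖^2 + (2*β + β^2))) * ρ ^ n)
            = ENNReal.ofReal (1/2 : ℝ) *
              ENNReal.ofReal (Real.exp (-(‖y‖^2 + (2*β + β^2)))) *
              ENNReal.ofReal (ρ ^ n) := by
          rw [ENNReal.ofReal_mul (by positivity), ENNReal.ofReal_mul (by positivity)]
        rw [e2]; ring
    _ = ENNReal.ofReal (1/2) * (ENNReal.ofReal (Real.exp (-(‖y‖^2 + (2*β + β^2)))) *
          volume (ball x ρ)) := by rw [hvx]
    _ ≤ ENNReal.ofReal (1/2) * gaussM n (ball x ρ) := mul_le_mul_right hlb _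
    _ ≤ gaussM n (A ∩ ball x ρ) := hx ρ hρ0 hρle
    _ ≤ gaussM n (A ∩ ball y r) := measure_mono (inter_subset_inter_right A hsub)

instance gaussM_sigmaFinite (n : ℕ) : SigmaFinite (gaussM n) := by
  unfold gaussM; infer_instance
instance dtt_sigmaFinite : SigmaFinite dtt := by
  unfold dtt; infer_instance
instance tentMeasure_sfinite (n : ℕ) : SFinite (tentMeasure n) := by
  unfold tentMeasure; infer_instance
lemma gaussCone_isOpen {n : ℕ} (α β : ℝ) (x : EuclideanSpace ℝ (Fin n)) :
    IsOpen (gaussCone α β x) := by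
  have h1 : IsOpen {p : EuclideanSpace ℝ (Fin n) × ℝ | 0 < p.2} :=
    isOpen_lt continuous_const continuous_snd
  have h2 : IsOpen {p : EuclideanSpace ℝ (Fin n) × ℝ |
      dist p.1 x < min (α * p.2) (β * mCut p.1)} :=
    isOpen_lt (continuous_fst.dist continuous_const)
      ((continuous_const.mul continuous_snd).min
        (continuous_const.mul (mCut_continuous.comp continuous_fst)))
  exact h1.inter h2

lemma measurable_gaussBallFn {n : ℕ} (α β : ℝ) (A : Set (EuclideanSpace ℝ (Fin n)))
    (hA : MeasurableSet A) :
    Measurable (fun p : EuclideanSpace ℝ (Fin n) × ℝ =>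
      gaussM n (A ∩ ball p.1 (min (α * p.2) (β * mCut p.1)))) := by
  have hs : MeasurableSet {q : (EuclideanSpace ℝ (Fin n) × ℝ) × EuclideanSpace ℝ (Fin n) |
      dist q.2 q.1.1 < min (α * q.1.2) (β * mCut q.1.1)} := by
    refine IsOpen.measurableSet ?_
    exact isOpen_lt (continuous_snd.dist continuous_fst.fst)
      ((continuous_const.mul continuous_fst.snd).min
        (continuous_const.mul (mCut_continuous.comp continuous_fst.fst)))
  have hs2 := hs.inter (measurable_snd hA)
  have h := measurable_measure_prodMk_left (ν := gaussM n) hs2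
  have heq : (fun p : EuclideanSpace ℝ (Fin n) × ℝ => gaussM n (Prod.mk p ⁻¹'
      ({q : (EuclideanSpace ℝ (Fin n) × ℝ) × EuclideanSpace ℝ (Fin n) |
        dist q.2 q.1.1 < min (α * q.1.2) (β * mCut q.1.1)} ∩ (Prod.snd ⁻¹' A))))
      = (fun p : EuclideanSpace ℝ (Fin n) × ℝ =>
        gaussM n (A ∩ ball p.1 (min (α * p.2) (β * mCut p.1)))) := by
    funext p
    congr 1
    ext z
    simp only [Set.mem_preimage, Set.mem_inter_iff, Set.mem_setOf_eq, mem_ball]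
    tauto
  rw [heq] at h
  exact h

lemma tent_ae_pos (n : ℕ) : ∀ᵐ p ∂(tentMeasure n), 0 < p.2 := by
  rw [ae_iff]
  have h1 : {p : EuclideanSpace ℝ (Fin n) × ℝ | ¬ 0 < p.2} = Set.univ ×ˢ Set.Iic 0 := by
    ext p; simp [not_lt]
  rw [h1, tentMeasure, Measure.prod_prod]
  have h2 : dtt (Set.Iic 0) = 0 := by
    rw [dtt, withDensity_apply _ measurableSet_Iic,
      Measure.restrict_restrict measurableSet_Iic, Set.Iic_inter_Ioi, Set.Ioc_self,
      Measure.restrict_empty, lintegral_zero_measure]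
  rw [h2, mul_zero]


theorem stmt13 {n : ℕ} (α β η : ℝ) (hα : 0 < α) (hβ : 0 < β) (hη : 0 < η) (hη1 : η < 1) :
    ∃ ηb : ℝ, 0 < ηb ∧ ηb < 1 ∧ ∃ C : ℝ, 0 < C ∧
      ∀ A : Set (EuclideanSpace ℝ (Fin n)), MeasurableSet A →
      ∀ H : EuclideanSpace ℝ (Fin n) × ℝ → ℝ≥0∞, Measurable H →
        (∫⁻ p in ⋃ x ∈ {x : EuclideanSpace ℝ (Fin n) | ∀ r : ℝ, 0 < r →
              r ≤ β * (1 + β) * mCut x →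
              ENNReal.ofReal ηb * gaussM n (Metric.ball x r)
                ≤ gaussM n (A ∩ Metric.ball x r)},
            gaussCone ((1 - η) * α) ((1 - η) * β) x, H p ∂ tentMeasure n)
          ≤ ENNReal.ofReal C *
            ∫⁻ x in A, (∫⁻ p in gaussCone α β x,
                H p / gaussM n (Metric.ball p.1 (min (α * p.2) (β * mCut p.1)))
                ∂ tentMeasure n) ∂ gaussM n := by
  classical
  have hc0 : (0:ℝ) < 1/2 * η ^ n * Real.exp (-(4*β + 4*β^2)) := by positivity
  refine ⟨1/2, by norm_num, by norm_num,
    (1/2 * η ^ n * Real.exp (-(4*β + 4*β^2)))⁻¹, inv_pos.mpr hc0, ?_⟩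
  intro A hA H hH
  -- abbreviations (as plain local functions)
  have hGmeas : Measurable (fun p : EuclideanSpace ℝ (Fin n) × ℝ =>
      gaussM n (ball p.1 (min (α * p.2) (β * mCut p.1)))) := by
    have h := measurable_gaussBallFn α β (Set.univ : Set (EuclideanSpace ℝ (Fin n)))
      MeasurableSet.univ
    simpa [Set.univ_inter] using h
  have hGAmeas := measurable_gaussBallFn α β A hA
  set S : Set (EuclideanSpace ℝ (Fin n)) := {x : EuclideanSpace ℝ (Fin n) | ∀ r : ℝ, 0 < r →
      r ≤ β * (1 + β) * mCut x →
      ENNReal.ofReal (1/2) * gaussM n (Metric.ball x r)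
        ≤ gaussM n (A ∩ Metric.ball x r)} with hSdef
  have hRmeas : MeasurableSet (⋃ x ∈ S, gaussCone ((1 - η) * α) ((1 - η) * β) x) :=
    (isOpen_biUnion fun x _ => gaussCone_isOpen _ _ x).measurableSet
  -- pointwise bound
  have hpt : ∀ p : EuclideanSpace ℝ (Fin n) × ℝ,
      (⋃ x ∈ S, gaussCone ((1 - η) * α) ((1 - η) * β) x).indicator H p ≤
        ENNReal.ofReal (1/2 * η ^ n * Real.exp (-(4*β + 4*β^2)))⁻¹ *
          (if 0 < p.2 then
            H p / gaussM n (ball p.1 (min (α * p.2) (β * mCut p.1))) *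
              gaussM n (A ∩ ball p.1 (min (α * p.2) (β * mCut p.1)))
          else 0) := by
    intro p
    by_cases hp : p ∈ ⋃ x ∈ S, gaussCone ((1 - η) * α) ((1 - η) * β) x
    · rw [Set.indicator_of_mem hp]
      obtain ⟨x, hxS, hpx⟩ := Set.mem_iUnion₂.mp hp
      obtain ⟨ht, hdist⟩ := hpx
      have hd' : dist p.1 x < (1 - η) * min (α * p.2) (β * mCut p.1) := by
        have h1η : (0:ℝ) ≤ 1 - η := by linarith
        calc dist p.1 x < min ((1 - η) * α * p.2) ((1 - η) * β * mCut p.1) := hdist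
          _ = (1 - η) * min (α * p.2) (β * mCut p.1) := by
              rw [mul_min_of_nonneg _ _ h1η, mul_assoc, mul_assoc]
      have hkey := key_density hα hβ hη hη1 A ht hd' hxS
      have hGp0 : gaussM n (ball p.1 (min (α * p.2) (β * mCut p.1))) ≠ 0 :=
        gaussM_ball_ne_zero _ (lt_min (mul_pos hα ht) (mul_pos hβ (mCut_pos _)))
      have hGpt : gaussM n (ball p.1 (min (α * p.2) (β * mCut p.1))) ≠ ⊤ :=
        gaussM_ball_ne_top _ _
      rw [if_pos ht]
      have hcanc : (gaussM n (ball p.1 (min (α * p.2) (β * mCut p.1))))⁻¹ *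
          gaussM n (ball p.1 (min (α * p.2) (β * mCut p.1))) = 1 :=
        ENNReal.inv_mul_cancel hGp0 hGpt
      have hstep : ENNReal.ofReal (1/2 * η ^ n * Real.exp (-(4*β + 4*β^2))) * H p ≤
          H p / gaussM n (ball p.1 (min (α * p.2) (β * mCut p.1))) *
            gaussM n (A ∩ ball p.1 (min (α * p.2) (β * mCut p.1))) := by
        have heq : H p / gaussM n (ball p.1 (min (α * p.2) (β * mCut p.1))) *
            (ENNReal.ofReal (1/2 * η ^ n * Real.exp (-(4*β + 4*β^2))) *
              gaussM n (ball p.1 (min (α * p.2) (β * mCut p.1)))) =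
            ENNReal.ofReal (1/2 * η ^ n * Real.exp (-(4*β + 4*β^2))) * H p := by
          rw [div_eq_mul_inv]
          have h2 : H p * (gaussM n (ball p.1 (min (α * p.2) (β * mCut p.1))))⁻¹ *
              (ENNReal.ofReal (1/2 * η ^ n * Real.exp (-(4*β + 4*β^2))) *
                gaussM n (ball p.1 (min (α * p.2) (β * mCut p.1)))) =
              ENNReal.ofReal (1/2 * η ^ n * Real.exp (-(4*β + 4*β^2))) * H p *
                ((gaussM n (ball p.1 (min (α * p.2) (β * mCut p.1))))⁻¹ *
                  gaussM n (ball p.1 (min (α * p.2) (β * mCut p.1)))) := by ring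
          rw [h2, hcanc, mul_one]
        rw [← heq]
        exact mul_le_mul_right hkey _
      calc H p = ENNReal.ofReal (1/2 * η ^ n * Real.exp (-(4*β + 4*β^2)))⁻¹ *
            (ENNReal.ofReal (1/2 * η ^ n * Real.exp (-(4*β + 4*β^2))) * H p) := by
            rw [← mul_assoc, ← ENNReal.ofReal_mul (inv_pos.mpr hc0).le,
              inv_mul_cancel₀ hc0.ne', ENNReal.ofReal_one, one_mul]
        _ ≤ ENNReal.ofReal (1/2 * η ^ n * Real.exp (-(4*β + 4*β^2)))⁻¹ *
            (H p / gaussM n (ball p.1 (min (α * p.2) (β * mCut p.1))) *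
              gaussM n (A ∩ ball p.1 (min (α * p.2) (β * mCut p.1)))) :=
            mul_le_mul_right hstep _
    · rw [Set.indicator_of_notMem hp]; exact zero_le
  -- Tonelli
  have hmeasU : Measurable (Function.uncurry fun (x : EuclideanSpace ℝ (Fin n))
      (p : EuclideanSpace ℝ (Fin n) × ℝ) =>
      if x ∈ A ∧ p ∈ gaussCone α β x then
        H p / gaussM n (ball p.1 (min (α * p.2) (β * mCut p.1))) else 0) := by
    have hS1 : MeasurableSet {q : EuclideanSpace ℝ (Fin n) × (EuclideanSpace ℝ (Fin n) × ℝ) |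
        q.1 ∈ A ∧ q.2 ∈ gaussCone α β q.1} := by
      have h1 : MeasurableSet {q : EuclideanSpace ℝ (Fin n) ×
          (EuclideanSpace ℝ (Fin n) × ℝ) | q.1 ∈ A} := measurable_fst hA
      have h2 : IsOpen {q : EuclideanSpace ℝ (Fin n) ×
          (EuclideanSpace ℝ (Fin n) × ℝ) | q.2 ∈ gaussCone α β q.1} := by
        have he : {q : EuclideanSpace ℝ (Fin n) × (EuclideanSpace ℝ (Fin n) × ℝ) |
            q.2 ∈ gaussCone α β q.1} = {q | 0 < q.2.2} ∩
            {q | dist q.2.1 q.1 < min (α * q.2.2) (β * mCut q.2.1)} := rfl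
        rw [he]
        exact (isOpen_lt continuous_const continuous_snd.snd).inter
          (isOpen_lt (continuous_snd.fst.dist continuous_fst)
            ((continuous_const.mul continuous_snd.snd).min
              (continuous_const.mul (mCut_continuous.comp continuous_snd.fst))))
      exact h1.inter h2.measurableSet
    have hg : Measurable fun q : EuclideanSpace ℝ (Fin n) × (EuclideanSpace ℝ (Fin n) × ℝ) =>
        H q.2 / gaussM n (ball q.2.1 (min (α * q.2.2) (β * mCut q.2.1))) :=
      (hH.comp measurable_snd).div (hGmeas.comp measurable_snd)
    have he2 : (Function.uncurry fun (x : EuclideanSpace ℝ (Fin n))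
        (p : EuclideanSpace ℝ (Fin n) × ℝ) =>
        if x ∈ A ∧ p ∈ gaussCone α β x then
          H p / gaussM n (ball p.1 (min (α * p.2) (β * mCut p.1))) else 0) =
        ({q : EuclideanSpace ℝ (Fin n) × (EuclideanSpace ℝ (Fin n) × ℝ) |
          q.1 ∈ A ∧ q.2 ∈ gaussCone α β q.1}).indicator
          (fun q => H q.2 / gaussM n (ball q.2.1 (min (α * q.2.2) (β * mCut q.2.1)))) := by
      funext q
      by_cases hq : q.1 ∈ A ∧ q.2 ∈ gaussCone α β q.1
      · simp [Function.uncurry, Set.indicator_apply, hq]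
      · simp [Function.uncurry, Set.indicator_apply, hq]
    rw [he2]
    exact hg.indicator hS1
  have hTon : (∫⁻ x in A, (∫⁻ p in gaussCone α β x,
        H p / gaussM n (Metric.ball p.1 (min (α * p.2) (β * mCut p.1)))
        ∂ tentMeasure n) ∂ gaussM n) =
      ∫⁻ p, (if 0 < p.2 then
          H p / gaussM n (ball p.1 (min (α * p.2) (β * mCut p.1))) *
            gaussM n (A ∩ ball p.1 (min (α * p.2) (β * mCut p.1)))
        else 0) ∂ tentMeasure n := by
    have step1 : (∫⁻ x in A, (∫⁻ p in gaussCone α β x,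
          H p / gaussM n (Metric.ball p.1 (min (α * p.2) (β * mCut p.1)))
          ∂ tentMeasure n) ∂ gaussM n) =
        ∫⁻ x, ∫⁻ p, (if x ∈ A ∧ p ∈ gaussCone α β x then
          H p / gaussM n (ball p.1 (min (α * p.2) (β * mCut p.1))) else 0)
          ∂ tentMeasure n ∂ gaussM n := by
      rw [← lintegral_indicator hA]
      refine lintegral_congr fun x => ?_
      by_cases hxA : x ∈ A
      · rw [Set.indicator_of_mem hxA,
          ← lintegral_indicator (gaussCone_isOpen α β x).measurableSet]
        refine lintegral_congr fun p => ?_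
        by_cases hpc : p ∈ gaussCone α β x
        · rw [Set.indicator_of_mem hpc, if_pos ⟨hxA, hpc⟩]
        · rw [Set.indicator_of_notMem hpc, if_neg (fun h => hpc h.2)]
      · rw [Set.indicator_of_notMem hxA]
        symm
        have hz : ∀ p : EuclideanSpace ℝ (Fin n) × ℝ,
            (if x ∈ A ∧ p ∈ gaussCone α β x then
              H p / gaussM n (ball p.1 (min (α * p.2) (β * mCut p.1))) else 0) = 0 :=
          fun p => if_neg (fun h => hxA h.1)
        calc (∫⁻ p, (if x ∈ A ∧ p ∈ gaussCone α β x then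
              H p / gaussM n (ball p.1 (min (α * p.2) (β * mCut p.1))) else 0)
              ∂ tentMeasure n) = ∫⁻ _, (0:ℝ≥0∞) ∂ tentMeasure n :=
            lintegral_congr fun p => hz p
          _ = 0 := lintegral_zero
    have step2 := lintegral_lintegral_swap (μ := gaussM n) (ν := tentMeasure n)
      (f := fun (x : EuclideanSpace ℝ (Fin n)) (p : EuclideanSpace ℝ (Fin n) × ℝ) =>
        if x ∈ A ∧ p ∈ gaussCone α β x then
          H p / gaussM n (ball p.1 (min (α * p.2) (β * mCut p.1))) else 0)
      hmeasU.aemeasurable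
    rw [step1, step2]
    refine lintegral_congr fun p => ?_
    by_cases hp : 0 < p.2
    · rw [if_pos hp]
      have hball : {x : EuclideanSpace ℝ (Fin n) | x ∈ A ∧ p ∈ gaussCone α β x} =
          A ∩ ball p.1 (min (α * p.2) (β * mCut p.1)) := by
        ext x
        simp only [Set.mem_setOf_eq, Set.mem_inter_iff, mem_ball]
        constructor
        · rintro ⟨h1, _, h3⟩
          exact ⟨h1, by rwa [dist_comm]⟩
        · rintro ⟨h1, h2⟩
          exact ⟨h1, hp, by rwa [dist_comm]⟩
      calc (∫⁻ x, (if x ∈ A ∧ p ∈ gaussCone α β x then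
            H p / gaussM n (ball p.1 (min (α * p.2) (β * mCut p.1))) else 0) ∂ gaussM n)
          = ∫⁻ x, (A ∩ ball p.1 (min (α * p.2) (β * mCut p.1))).indicator
              (fun _ => H p / gaussM n (ball p.1 (min (α * p.2) (β * mCut p.1)))) x
              ∂ gaussM n := by
            refine lintegral_congr fun x => ?_
            by_cases hx : x ∈ A ∩ ball p.1 (min (α * p.2) (β * mCut p.1))
            · rw [Set.indicator_of_mem hx, if_pos]
              rw [← hball] at hx
              exact hx
            · rw [Set.indicator_of_notMem hx, if_neg]
              rw [← hball] at hx
              exact hx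
        _ = ∫⁻ _ in A ∩ ball p.1 (min (α * p.2) (β * mCut p.1)),
              H p / gaussM n (ball p.1 (min (α * p.2) (β * mCut p.1))) ∂ gaussM n :=
            lintegral_indicator (hA.inter measurableSet_ball) _
        _ = H p / gaussM n (ball p.1 (min (α * p.2) (β * mCut p.1))) *
              gaussM n (A ∩ ball p.1 (min (α * p.2) (β * mCut p.1))) :=
            setLIntegral_const _ _
    · rw [if_neg hp]
      have hz : ∀ x, (if x ∈ A ∧ p ∈ gaussCone α β x then
          H p / gaussM n (ball p.1 (min (α * p.2) (β * mCut p.1))) else 0) = 0 :=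
        fun x => if_neg (fun h => hp h.2.1)
      calc (∫⁻ x, (if x ∈ A ∧ p ∈ gaussCone α β x then
            H p / gaussM n (ball p.1 (min (α * p.2) (β * mCut p.1))) else 0) ∂ gaussM n)
          = ∫⁻ _, (0:ℝ≥0∞) ∂ gaussM n := lintegral_congr fun x => hz x
        _ = 0 := lintegral_zero
  calc (∫⁻ p in ⋃ x ∈ S, gaussCone ((1 - η) * α) ((1 - η) * β) x, H p ∂ tentMeasure n)
      = ∫⁻ p, (⋃ x ∈ S, gaussCone ((1 - η) * α) ((1 - η) * β) x).indicator H p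
          ∂ tentMeasure n := (lintegral_indicator hRmeas H).symm
    _ ≤ ∫⁻ p, ENNReal.ofReal (1/2 * η ^ n * Real.exp (-(4*β + 4*β^2)))⁻¹ *
          (if 0 < p.2 then
            H p / gaussM n (ball p.1 (min (α * p.2) (β * mCut p.1))) *
              gaussM n (A ∩ ball p.1 (min (α * p.2) (β * mCut p.1)))
          else 0) ∂ tentMeasure n := lintegral_mono hpt
    _ = ENNReal.ofReal (1/2 * η ^ n * Real.exp (-(4*β + 4*β^2)))⁻¹ *
          ∫⁻ p, (if 0 < p.2 then
            H p / gaussM n (ball p.1 (min (α * p.2) (β * mCut p.1))) *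
              gaussM n (A ∩ ball p.1 (min (α * p.2) (β * mCut p.1)))
          else 0) ∂ tentMeasure n := lintegral_const_mul' _ _ ENNReal.ofReal_ne_top
    _ = ENNReal.ofReal (1/2 * η ^ n * Real.exp (-(4*β + 4*β^2)))⁻¹ *
          ∫⁻ x in A, (∫⁻ p in gaussCone α β x,
            H p / gaussM n (Metric.ball p.1 (min (α * p.2) (β * mCut p.1)))
            ∂ tentMeasure n) ∂ gaussM n := by rw [hTon]
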